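/- arXiv:2305.19046 — 2 statements merged into one kernel-verified Lean document; each statement's English description precedes it below -/
import Mathlib

section
/- Let 0 < γ < β ≤ n. For every set E ⊆ ℝ^n, ((1/ω_β) H^β_∞(E))^(1/β) ≤ ((1/ω_γ) H^γ_∞(E))^(1/γ), where H^β_∞ denotes the β-dimensional Hausdorff content defined via coverings by balls with the normalization constant ω_β = π^(β/2)/Γ(β/2+1). -/
open scoped ENNReal
open Metric Set MeasureTheory

noncomputable section

/-- `ℝⁿ` as Euclidean space. -/
abbrev Rn (n : ℕ) := EuclideanSpace ℝ (Fin n)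

/-- The Choquet integral of a nonnegative function `g` with respect to a
(monotone) set function `C`: `∫ g dC := ∫_0^∞ C({g > t}) dt`. -/
noncomputable def choquet {X : Type*} (C : Set X → ℝ≥0∞) (g : X → ℝ≥0∞) : ℝ≥0∞ :=
  ∫⁻ t in Ioi (0 : ℝ), C {x | ENNReal.ofReal t < g x}

/-- The Choquet integral of `g` restricted to a set `A`. -/
noncomputable def choquetOn {X : Type*} (C : Set X → ℝ≥0∞) (A : Set X) (g : X → ℝ≥0∞) : ℝ≥0∞ :=
  ∫⁻ t in Ioi (0 : ℝ), C {x | x ∈ A ∧ ENNReal.ofReal t < g x}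

/-- The `L^∞(C)` norm: `inf {λ > 0 : C({|f| > λ}) = 0}` (formulated in `ℝ≥0∞`). -/
noncomputable def choquetEssSup {X : Type*} (C : Set X → ℝ≥0∞) (f : X → ℝ) : ℝ≥0∞ :=
  sInf {l : ℝ≥0∞ | C {x | l < ENNReal.ofReal |f x|} = 0}

/-- `C`-quasicontinuity of a function `f`. -/
def QuasiCont {X : Type*} [TopologicalSpace X] (C : Set X → ℝ≥0∞) (f : X → ℝ) : Prop :=
  ∀ ε : ℝ≥0∞, 0 < ε → ∃ U : Set X, IsOpen U ∧ C U < ε ∧ ContinuousOn f Uᶜ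

/-- Membership in the capacitary space `L^p(C)`: `C`-quasicontinuous with
finite `p`-th power Choquet integral. -/
def MemChoquetLp {X : Type*} [TopologicalSpace X] (C : Set X → ℝ≥0∞) (p : ℝ) (f : X → ℝ) : Prop :=
  QuasiCont C f ∧ choquet C (fun x => ENNReal.ofReal |f x| ^ p) < ∞

/-- The normalization constant `ω_β = π^{β/2}/Γ(β/2+1)`. -/
noncomputable def omegaC (β : ℝ) : ℝ≥0∞ :=
  ENNReal.ofReal (Real.pi ^ (β / 2) / Real.Gamma (β / 2 + 1))

/-- The `β`-dimensional Hausdorff content `H^β_∞`, defined via countable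
coverings by balls: `inf {∑ ω_β r_i^β : E ⊆ ⋃ B(x_i, r_i)}`. -/
noncomputable def hContent (n : ℕ) (β : ℝ) (E : Set (Rn n)) : ℝ≥0∞ :=
  ⨅ (c : ℕ → Rn n × ℝ) (_ : E ⊆ ⋃ i, ball (c i).1 (c i).2),
    ∑' i, omegaC β * ENNReal.ofReal ((c i).2 ^ β)

/-- The centered Hausdorff content maximal function
`M_{H^β_∞} g(x) := sup_{r>0} (1/(ω_β r^β)) ∫_{B(x,r)} g dH^β_∞`. -/
noncomputable def maximalH (n : ℕ) (β : ℝ) (g : Rn n → ℝ≥0∞) (x : Rn n) : ℝ≥0∞ :=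
  ⨆ (r : ℝ) (_ : 0 < r),
    (omegaC β * ENNReal.ofReal (r ^ β))⁻¹ * choquetOn (hContent n β) (ball x r) g
/-- `ℓ^1`-to-`ℓ^p` inequality in `ℝ≥0∞`: for `1 ≤ p`, `∑ aᵢᵖ ≤ (∑ aᵢ)ᵖ`. -/
lemma tsum_rpow_le_rpow_tsum_aux (a : ℕ → ℝ≥0∞) {p : ℝ} (hp : 1 ≤ p) :
    ∑' i, a i ^ p ≤ (∑' i, a i) ^ p := by
  have hp0 : 0 < p := lt_of_lt_of_le one_pos hp
  set S := ∑' i, a i with hS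
  by_cases hStop : S = ∞
  · rw [hStop, ENNReal.top_rpow_of_pos hp0]; exact le_top
  have hterm : ∀ i, a i ^ p ≤ S ^ (p - 1) * a i := by
    intro i
    by_cases hai : a i = 0
    · simp [hai, ENNReal.zero_rpow_of_pos hp0]
    · have haiS : a i ≤ S := ENNReal.le_tsum i
      have haitop : a i ≠ ∞ := fun h => hStop (top_le_iff.mp (h ▸ haiS))
      have h4 := ENNReal.rpow_add (x := a i) (p - 1) 1 hai haitop
      rw [ENNReal.rpow_one, sub_add_cancel] at h4
      rw [h4]
      exact mul_le_mul_left (ENNReal.rpow_le_rpow haiS (by linarith)) _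
  calc ∑' i, a i ^ p ≤ ∑' i, S ^ (p - 1) * a i := ENNReal.tsum_le_tsum hterm
    _ = S ^ (p - 1) * S := by rw [ENNReal.tsum_mul_left]
    _ = S ^ p := by
        by_cases hS0 : S = 0
        · simp [hS0, ENNReal.zero_rpow_of_pos hp0]
        · have h5 := ENNReal.rpow_add (x := S) (p - 1) 1 hS0 hStop
          rw [ENNReal.rpow_one, sub_add_cancel] at h5
          rw [h5]

lemma omegaC_pos {β : ℝ} (hβ : 0 < β) : 0 < omegaC β := by
  apply ENNReal.ofReal_pos.mpr
  apply div_pos (Real.rpow_pos_of_pos Real.pi_pos _)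
  exact Real.Gamma_pos_of_pos (by linarith)

lemma omegaC_ne_top (β : ℝ) : omegaC β ≠ ∞ := ENNReal.ofReal_ne_top

/-- For `0 < γ < β ≤ n` and every `E ⊆ ℝ^n`,
`((1/ω_β) H^β_∞(E))^(1/β) ≤ ((1/ω_γ) H^γ_∞(E))^(1/γ)`. -/


theorem statement1 (n : ℕ) (γ β : ℝ) (hγ : 0 < γ) (hγβ : γ < β) (hβn : β ≤ n)
    (E : Set (Rn n)) :
    ((omegaC β)⁻¹ * hContent n β E) ^ (1 / β) ≤ ((omegaC γ)⁻¹ * hContent n γ E) ^ (1 / γ) := by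
  have hβ : 0 < β := hγ.trans hγβ
  have hωγ0 : omegaC γ ≠ 0 := (omegaC_pos hγ).ne'
  have hωγt : omegaC γ ≠ ∞ := omegaC_ne_top γ
  have hωβ0 : omegaC β ≠ 0 := (omegaC_pos hβ).ne'
  have hωβt : omegaC β ≠ ∞ := omegaC_ne_top β
  rw [← ENNReal.rpow_le_rpow_iff hγ, ← ENNReal.rpow_mul, ← ENNReal.rpow_mul,
    one_div_mul_cancel hγ.ne', ENNReal.rpow_one]
  have key : omegaC γ * (((omegaC β)⁻¹ * hContent n β E) ^ (1 / β * γ)) ≤ hContent n γ E := by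
    conv_rhs => rw [hContent]
    refine le_iInf fun c => le_iInf fun hc => ?_
    rw [ENNReal.tsum_mul_left, ENNReal.mul_le_mul_iff_right hωγ0 hωγt]
    -- modified cover with nonnegative radii
    set m : ℕ → ℝ := fun i => max (c i).2 0 with hm
    have hm0 : ∀ i, 0 ≤ m i := fun i => le_max_right _ _
    have hc' : E ⊆ ⋃ i, ball (c i).1 (m i) :=
      hc.trans (iUnion_mono fun i => ball_subset_ball (le_max_left _ _))
    set T : ℝ≥0∞ := ∑' i, ENNReal.ofReal ((c i).2 ^ γ) with hT
    set M : ℝ≥0∞ := ∑' i, ENNReal.ofReal (m i ^ β) with hM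
    have h1 : hContent n β E ≤ omegaC β * M := by
      rw [hM, ← ENNReal.tsum_mul_left, hContent]
      exact iInf_le_of_le (fun i => ((c i).1, m i)) (iInf_le_of_le hc' le_rfl)
    have h2 : (omegaC β)⁻¹ * hContent n β E ≤ M := by
      calc (omegaC β)⁻¹ * hContent n β E ≤ (omegaC β)⁻¹ * (omegaC β * M) :=
            mul_le_mul_right h1 _
        _ = M := by rw [← mul_assoc, ENNReal.inv_mul_cancel hωβ0 hωβt, one_mul]
    have h3 : M ≤ T ^ (β / γ) := by
      have heq : ∀ i, ENNReal.ofReal (m i ^ β) = ENNReal.ofReal (m i ^ γ) ^ (β / γ) := by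
        intro i
        rw [ENNReal.ofReal_rpow_of_nonneg (Real.rpow_nonneg (hm0 i) _)
            (by positivity : (0:ℝ) ≤ β / γ),
          ← Real.rpow_mul (hm0 i), mul_div_cancel₀ _ hγ.ne']
      have hle : ∀ i, ENNReal.ofReal (m i ^ γ) ≤ ENNReal.ofReal ((c i).2 ^ γ) := by
        intro i
        rcases le_or_gt (c i).2 0 with h | h
        · have : m i = 0 := max_eq_right h
          simp [this, Real.zero_rpow hγ.ne']
        · have : m i = (c i).2 := max_eq_left h.le
          rw [this]
      calc M = ∑' i, ENNReal.ofReal (m i ^ γ) ^ (β / γ) := by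
              rw [hM]; exact tsum_congr heq
        _ ≤ (∑' i, ENNReal.ofReal (m i ^ γ)) ^ (β / γ) :=
              tsum_rpow_le_rpow_tsum_aux _ ((one_le_div hγ).mpr hγβ.le)
        _ ≤ T ^ (β / γ) := ENNReal.rpow_le_rpow (ENNReal.tsum_le_tsum hle) (by positivity)
    calc ((omegaC β)⁻¹ * hContent n β E) ^ (1 / β * γ)
        ≤ (T ^ (β / γ)) ^ (1 / β * γ) :=
          ENNReal.rpow_le_rpow (h2.trans h3) (by positivity)
      _ = T := by
          rw [← ENNReal.rpow_mul]
          have : β / γ * (1 / β * γ) = 1 := by field_simp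
          rw [this, ENNReal.rpow_one]
  calc ((omegaC β)⁻¹ * hContent n β E) ^ (1 / β * γ)
      = (omegaC γ)⁻¹ * (omegaC γ * ((omegaC β)⁻¹ * hContent n β E) ^ (1 / β * γ)) := by
        rw [← mul_assoc, ENNReal.inv_mul_cancel hωγ0 hωγt, one_mul]
    _ ≤ (omegaC γ)⁻¹ * hContent n γ E := mul_le_mul_right key _


end
end

section
/- Let 0 < γ < β ≤ n and let f : ℝ^n → [0,∞]. Then ∫ f dH^β_∞ ≤ ω_β (1/ω_γ)^(β/γ) (β/γ) (∫ f^(γ/β) dH^γ_∞)^(β/γ), where the integrals are Choquet integrals with respect to the Hausdorff contents. -/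
open scoped ENNReal
open Metric Set MeasureTheory

noncomputable section

/-! For a cover of `E` by balls of radii `rᵢ`, `∑ rᵢ^β = ∑ (rᵢ^γ)^(β/γ) ≤ (∑ rᵢ^γ)^(β/γ)`, hence
`H^β_∞(E) ≤ ω_β ω_γ^(-β/γ) H^γ_∞(E)^(β/γ)`. Apply this to the level sets
`{f > t} = {f^(γ/β) > t^(γ/β)}` and substitute `t = s^(β/γ)`. The function
`φ(s) = H^γ_∞{f^(γ/β) > s}` is decreasing, so `s φ(s) ≤ ∫ φ`, and therefore
`∫ (β/γ) s^(β/γ-1) φ(s)^(β/γ) ds ≤ (β/γ) (∫ φ)^(β/γ-1) ∫ φ`. -/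

namespace ENNReal

lemma rpow_sub_one_mul_self (x : ℝ≥0∞) {p : ℝ} (hp : 1 ≤ p) : x ^ (p - 1) * x = x ^ p := by
  conv_rhs => rw [← sub_add_cancel p 1, rpow_add_of_nonneg _ _ (by linarith) zero_le_one, rpow_one]

lemma tsum_rpow_le_rpow_tsum (a : ℕ → ℝ≥0∞) {p : ℝ} (hp : 1 ≤ p) :
    ∑' i, a i ^ p ≤ (∑' i, a i) ^ p :=
  calc ∑' i, a i ^ p = ∑' i, a i ^ (p - 1) * a i := by simp only [rpow_sub_one_mul_self _ hp]
    _ ≤ ∑' i, (∑' j, a j) ^ (p - 1) * a i :=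
        ENNReal.tsum_le_tsum fun i =>
          mul_le_mul_left (rpow_le_rpow (ENNReal.le_tsum i) (by linarith)) _
    _ = (∑' i, a i) ^ p := by rw [ENNReal.tsum_mul_left, rpow_sub_one_mul_self _ hp]

lemma ofReal_rpow_le_ofReal_rpow (r : ℝ) {γ : ℝ} (hγ : 0 < γ) :
    ENNReal.ofReal r ^ γ ≤ ENNReal.ofReal (r ^ γ) := by
  rcases le_or_gt 0 r with hr | hr
  · rw [ofReal_rpow_of_nonneg hr hγ.le]
  · simp [ofReal_of_nonpos hr.le, zero_rpow_of_pos hγ]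

end ENNReal

lemma hContent_mono (n : ℕ) (β : ℝ) {E F : Set (Rn n)} (h : E ⊆ F) :
    hContent n β E ≤ hContent n β F :=
  le_iInf₂ fun c hc => iInf₂_le c (h.trans hc)

lemma hContent_le_tsum {n : ℕ} {β : ℝ} (hβ : 0 < β) {E : Set (Rn n)} (c : ℕ → Rn n × ℝ)
    (hc : E ⊆ ⋃ i, ball (c i).1 (c i).2) :
    hContent n β E ≤ ∑' i, omegaC β * ENNReal.ofReal (c i).2 ^ β := by
  -- balls of nonpositive radius are empty, and `Real.rpow` is junk at negative bases
  have hball : ∀ i, ball (c i).1 (max (c i).2 0) = ball (c i).1 (c i).2 := fun i => by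
    rcases le_or_gt (c i).2 0 with h | h
    · rw [max_eq_right h, ball_eq_empty.2 le_rfl, ball_eq_empty.2 h]
    · rw [max_eq_left h.le]
  calc hContent n β E ≤ ∑' i, omegaC β * ENNReal.ofReal (max (c i).2 0 ^ β) :=
        iInf₂_le (fun i => ((c i).1, max (c i).2 0)) (by simpa only [hball] using hc)
    _ = ∑' i, omegaC β * ENNReal.ofReal (c i).2 ^ β := by
        simp [← ENNReal.ofReal_rpow_of_nonneg (le_max_right _ 0) hβ.le, ENNReal.ofReal_max]

lemma hContent_le_mul_hContent_rpow (n : ℕ) {γ β : ℝ} (hγ : 0 < γ) (hγβ : γ ≤ β)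
    (E : Set (Rn n)) :
    hContent n β E ≤ omegaC β * (omegaC γ)⁻¹ ^ (β / γ) * hContent n γ E ^ (β / γ) := by
  set p := β / γ
  have hp : 1 ≤ p := (one_le_div hγ).2 hγβ
  have hωγ : omegaC γ ≠ 0 := (omegaC_pos hγ).ne'
  set K := omegaC β * (omegaC γ)⁻¹ ^ p
  have hK0 : K ≠ 0 := mul_ne_zero (omegaC_pos (hγ.trans_le hγβ)).ne' <|
    (ENNReal.rpow_pos (ENNReal.inv_pos.2 (omegaC_ne_top γ)) (ENNReal.inv_ne_top.2 hωγ)).ne'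
  have hKt : K ≠ ∞ := ENNReal.mul_ne_top (omegaC_ne_top β) <|
    ENNReal.rpow_ne_top_of_nonneg (by linarith) (ENNReal.inv_ne_top.2 hωγ)
  have hinf : K * hContent n γ E ^ p = ⨅ (c : ℕ → Rn n × ℝ) (_ : E ⊆ ⋃ i, ball (c i).1 (c i).2),
      K * (∑' i, omegaC γ * ENNReal.ofReal ((c i).2 ^ γ)) ^ p := by
    rw [hContent, ← ENNReal.orderIsoRpow_apply p (by linarith)]
    simp only [OrderIso.map_iInf, ENNReal.mul_iInf_of_ne hK0 hKt, ENNReal.orderIsoRpow_apply]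
  rw [hinf]
  refine le_iInf₂ fun c hc => ?_
  calc hContent n β E ≤ ∑' i, omegaC β * ENNReal.ofReal (c i).2 ^ β :=
        hContent_le_tsum (hγ.trans_le hγβ) c hc
    _ = omegaC β * ∑' i, (ENNReal.ofReal (c i).2 ^ γ) ^ p := by
        rw [ENNReal.tsum_mul_left]
        simp only [← ENNReal.rpow_mul, mul_div_cancel₀ β hγ.ne', p]
    _ ≤ omegaC β * (∑' i, ENNReal.ofReal (c i).2 ^ γ) ^ p := by
        gcongr
        exact ENNReal.tsum_rpow_le_rpow_tsum _ hp
    _ ≤ omegaC β * ((omegaC γ)⁻¹ * ∑' i, omegaC γ * ENNReal.ofReal ((c i).2 ^ γ)) ^ p := by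
        rw [ENNReal.tsum_mul_left, ← mul_assoc, ENNReal.inv_mul_cancel hωγ (omegaC_ne_top γ),
          one_mul]
        gcongr with i
        exact ENNReal.ofReal_rpow_le_ofReal_rpow _ hγ
    _ = K * (∑' i, omegaC γ * ENNReal.ofReal ((c i).2 ^ γ)) ^ p := by
        rw [ENNReal.mul_rpow_of_nonneg _ _ (by linarith), mul_assoc]

lemma lintegral_Ioi_eq_lintegral_comp_rpow {p : ℝ} (hp : 0 < p) (G : ℝ → ℝ≥0∞) :
    ∫⁻ t in Ioi (0 : ℝ), G t =
      ∫⁻ s in Ioi (0 : ℝ), ENNReal.ofReal (p * s ^ (p - 1)) * G (s ^ p) := by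
  have himage : (fun s : ℝ => s ^ p) '' Ioi 0 = Ioi 0 := by
    refine Subset.antisymm (image_subset_iff.2 fun s hs => Real.rpow_pos_of_pos hs p) fun t ht =>
      ⟨t ^ p⁻¹, Real.rpow_pos_of_pos ht _, Real.rpow_inv_rpow (le_of_lt ht) hp.ne'⟩
  have hinj : InjOn (fun s : ℝ => s ^ p) (Ioi 0) :=
    (Real.rpow_left_injOn hp.ne').mono fun _ hs => le_of_lt (mem_Ioi.1 hs)
  have h := lintegral_image_eq_lintegral_abs_det_fderiv_mul volume measurableSet_Ioi
    (fun x hx => ((Real.hasDerivAt_rpow_const (p := p) (Or.inl (ne_of_gt hx))).hasFDerivAt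
      ).hasFDerivWithinAt) hinj G
  rw [himage] at h
  rw [h]
  refine setLIntegral_congr_fun measurableSet_Ioi fun s hs => ?_
  simp [abs_of_nonneg (mul_nonneg hp.le (Real.rpow_nonneg (le_of_lt hs) (p - 1)))]

lemma Antitone.mul_ofReal_le_lintegral_Ioi {φ : ℝ → ℝ≥0∞} (hφ : Antitone φ) (s : ℝ) :
    φ s * ENNReal.ofReal s ≤ ∫⁻ t in Ioi (0 : ℝ), φ t :=
  calc φ s * ENNReal.ofReal s = ∫⁻ _ in Ioc (0 : ℝ) s, φ s := by
        rw [setLIntegral_const, Real.volume_Ioc, sub_zero]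
    _ ≤ ∫⁻ t in Ioc (0 : ℝ) s, φ t := setLIntegral_mono' measurableSet_Ioc fun t ht => hφ ht.2
    _ ≤ ∫⁻ t in Ioi (0 : ℝ), φ t := lintegral_mono_set Ioc_subset_Ioi_self

lemma Antitone.lintegral_Ioi_rpow_comp_rpow_inv_le {φ : ℝ → ℝ≥0∞} (hφ : Antitone φ) {p : ℝ}
    (hp : 1 ≤ p) :
    ∫⁻ t in Ioi (0 : ℝ), φ (t ^ p⁻¹) ^ p ≤ ENNReal.ofReal p * (∫⁻ t in Ioi (0 : ℝ), φ t) ^ p := by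
  set A := ∫⁻ t in Ioi (0 : ℝ), φ t
  have hp0 : 0 < p := by linarith
  have hpointwise : ∀ s ∈ Ioi (0 : ℝ), ENNReal.ofReal (p * s ^ (p - 1)) * φ ((s ^ p) ^ p⁻¹) ^ p
      ≤ ENNReal.ofReal p * A ^ (p - 1) * φ s := fun s hs => by
    rw [Real.rpow_rpow_inv (le_of_lt hs) hp0.ne', ← ENNReal.rpow_sub_one_mul_self _ hp,
      ENNReal.ofReal_mul hp0.le, ← ENNReal.ofReal_rpow_of_pos hs]
    calc ENNReal.ofReal p * ENNReal.ofReal s ^ (p - 1) * (φ s ^ (p - 1) * φ s)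
        = ENNReal.ofReal p * (φ s * ENNReal.ofReal s) ^ (p - 1) * φ s := by
          rw [ENNReal.mul_rpow_of_nonneg _ _ (by linarith)]
          ring
      _ ≤ ENNReal.ofReal p * A ^ (p - 1) * φ s := by
          gcongr
          exact hφ.mul_ofReal_le_lintegral_Ioi s
  calc ∫⁻ t in Ioi (0 : ℝ), φ (t ^ p⁻¹) ^ p
      = ∫⁻ s in Ioi (0 : ℝ), ENNReal.ofReal (p * s ^ (p - 1)) * φ ((s ^ p) ^ p⁻¹) ^ p :=
        lintegral_Ioi_eq_lintegral_comp_rpow hp0 _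
    _ ≤ ∫⁻ s in Ioi (0 : ℝ), ENNReal.ofReal p * A ^ (p - 1) * φ s :=
        setLIntegral_mono' measurableSet_Ioi hpointwise
    _ = ENNReal.ofReal p * A ^ p := by
        rw [lintegral_const_mul _ hφ.measurable, mul_assoc, ENNReal.rpow_sub_one_mul_self _ hp]

theorem statement2_general (n : ℕ) (γ β : ℝ) (hγ : 0 < γ) (hγβ : γ < β)
    (f : Rn n → ℝ≥0∞) :
    choquet (hContent n β) f ≤
      omegaC β * ((omegaC γ)⁻¹) ^ (β / γ) * ENNReal.ofReal (β / γ) *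
        (choquet (hContent n γ) (fun x => f x ^ (γ / β))) ^ (β / γ) := by
  have hp : 1 ≤ β / γ := (one_le_div hγ).2 hγβ.le
  set φ : ℝ → ℝ≥0∞ := fun s => hContent n γ {x | ENNReal.ofReal s < f x ^ (γ / β)}
  have hφ : Antitone φ := fun s s' hss' =>
    hContent_mono n γ fun x hx => (ENNReal.ofReal_le_ofReal hss').trans_lt hx
  have hlevel : ∀ t ∈ Ioi (0 : ℝ),
      {x | ENNReal.ofReal t < f x} = {x | ENNReal.ofReal (t ^ (β / γ)⁻¹) < f x ^ (γ / β)} :=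
    fun t ht => by
      ext x
      rw [mem_ofPred_eq, mem_ofPred_eq, inv_div, ← ENNReal.ofReal_rpow_of_pos ht,
        ENNReal.rpow_lt_rpow_iff (div_pos hγ (hγ.trans hγβ))]
  calc choquet (hContent n β) f
      ≤ ∫⁻ t in Ioi (0 : ℝ), omegaC β * (omegaC γ)⁻¹ ^ (β / γ) * φ (t ^ (β / γ)⁻¹) ^ (β / γ) :=
        setLIntegral_mono' measurableSet_Ioi fun t ht =>
          hlevel t ht ▸ hContent_le_mul_hContent_rpow n hγ hγβ.le _
    _ = omegaC β * (omegaC γ)⁻¹ ^ (β / γ) * ∫⁻ t in Ioi (0 : ℝ), φ (t ^ (β / γ)⁻¹) ^ (β / γ) :=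
        lintegral_const_mul _ ((hφ.measurable.comp (measurable_id.pow_const _)).pow_const _)
    _ ≤ omegaC β * (omegaC γ)⁻¹ ^ (β / γ) *
          (ENNReal.ofReal (β / γ) * (∫⁻ t in Ioi (0 : ℝ), φ t) ^ (β / γ)) := by
        gcongr
        exact hφ.lintegral_Ioi_rpow_comp_rpow_inv_le hp
    _ = _ := (mul_assoc _ _ _).symm

/-- For `0 < γ < β ≤ n` and `f : ℝ^n → [0,∞]`,
`∫ f dH^β_∞ ≤ ω_β (1/ω_γ)^{β/γ} (β/γ) (∫ f^{γ/β} dH^γ_∞)^{β/γ}`. -/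
theorem statement2 (n : ℕ) (γ β : ℝ) (hγ : 0 < γ) (hγβ : γ < β) (hβn : β ≤ n)
    (f : Rn n → ℝ≥0∞) :
    choquet (hContent n β) f ≤
      omegaC β * ((omegaC γ)⁻¹) ^ (β / γ) * ENNReal.ofReal (β / γ) *
        (choquet (hContent n γ) (fun x => f x ^ (γ / β))) ^ (β / γ) :=
  statement2_general n γ β hγ hγβ f

end
end
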